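/- arXiv:2001.06053 — 2 statements merged into one kernel-verified Lean document; each statement's English description precedes it below -/
import Mathlib

section
/- Let Q, R, S be arcs in the sphere such that R and S both have their two ends in Q but are otherwise disjoint from Q, and such that R and S have finitely many intersection points, all of which are crossings. If short subarcs of S starting at the two ends of S lie on different sides of the unique simple closed curve contained in R ∪ Q, then (R ∩ S) \ Q contains at least one point. -/
open Set Topology

noncomputable section

/-- The sphere `S²`, realized as the unit sphere in `ℝ³`. -/
abbrev Sph : Type := Metric.sphere (0 : EuclideanSpace ℝ (Fin 3)) 1

/-- `A` is an arc (homeomorph of a compact interval) in the sphere. -/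
def IsArc (A : Set Sph) : Prop :=
  ∃ f : ℝ → Sph, ContinuousOn f (Set.Icc 0 1) ∧ Set.InjOn f (Set.Icc 0 1) ∧
    f '' Set.Icc 0 1 = A

/-- `A` is an arc in the sphere with ends `a` and `b`. -/
def IsArcEnds (A : Set Sph) (a b : Sph) : Prop :=
  ∃ f : ℝ → Sph, ContinuousOn f (Set.Icc 0 1) ∧ Set.InjOn f (Set.Icc 0 1) ∧
    f '' Set.Icc 0 1 = A ∧ f 0 = a ∧ f 1 = b

/-- `C` is a simple closed curve (homeomorph of the circle) in the sphere. -/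
def IsSimpleClosedCurve (C : Set Sph) : Prop :=
  ∃ f : Metric.sphere (0 : ℂ) 1 → Sph,
    Continuous f ∧ Function.Injective f ∧ Set.range f = C

/-- Two subsets of the sphere cross at `p`: near `p` there is a homeomorphism of a
neighbourhood of `p` with an open subset of the plane taking `γ₁` to the horizontal
axis and `γ₂` to the vertical axis; in particular the curves locally cross from one
side of each other to the other. -/
def IsCrossing (γ₁ γ₂ : Set Sph) (p : Sph) : Prop :=
  p ∈ γ₁ ∩ γ₂ ∧
  ∃ φ : PartialHomeomorph Sph (ℝ × ℝ), p ∈ φ.source ∧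
    φ '' (γ₁ ∩ φ.source) = {q | q ∈ φ.target ∧ q.2 = 0} ∧
    φ '' (γ₂ ∩ φ.source) = {q | q ∈ φ.target ∧ q.1 = 0}

/-- `F` is a face (connected component of the complement) of the set `X ⊆ S²`. -/
def IsFaceOf (F X : Set Sph) : Prop :=
  ∃ x ∈ Xᶜ, F = connectedComponentIn Xᶜ x

/-- Let `Q, R, S` be arcs in the sphere such that `R` and `S` both
have their two ends in `Q` but are otherwise disjoint from `Q`, and such that `R` and
`S` have finitely many intersection points, all of which are crossings.  If short
subarcs of `S` starting at the two ends of `S` lie on different sides of the unique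
simple closed curve `C` contained in `R ∪ Q`, then `(R ∩ S) \ Q` contains at least one
point. -/
theorem arcs_crossing_observation (Q R S C : Set Sph)
    (hQ : IsArc Q)
    (r₀ r₁ : Sph) (hR : IsArcEnds R r₀ r₁)
    (hr₀ : r₀ ∈ Q) (hr₁ : r₁ ∈ Q) (hRQ : R ∩ Q ⊆ {r₀, r₁})
    (g : ℝ → Sph) (hgc : ContinuousOn g (Set.Icc 0 1))
    (hgi : Set.InjOn g (Set.Icc 0 1)) (hgS : g '' Set.Icc 0 1 = S)
    (hs₀ : g 0 ∈ Q) (hs₁ : g 1 ∈ Q) (hSQ : S ∩ Q ⊆ {g 0, g 1})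
    (hfin : (R ∩ S).Finite) (hcr : ∀ p ∈ R ∩ S, IsCrossing R S p)
    (hC : IsSimpleClosedCurve C) (hCsub : C ⊆ R ∪ Q)
    (hCuniq : ∀ C' : Set Sph, IsSimpleClosedCurve C' → C' ⊆ R ∪ Q → C' = C)
    (hsides : ∃ ε > (0:ℝ), ∃ U V : Set Sph,
      (∃ x ∈ Cᶜ, U = connectedComponentIn Cᶜ x) ∧
      (∃ x ∈ Cᶜ, V = connectedComponentIn Cᶜ x) ∧
      U ≠ V ∧ g '' Set.Ioc 0 ε ⊆ U ∧ g '' Set.Ico (1 - ε) 1 ⊆ V) :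
    ((R ∩ S) \ Q).Nonempty := by
  obtain ⟨ε, hε, U, V, ⟨xU, hxU, hUdef⟩, ⟨xV, hxV, hVdef⟩, hUV, hSU, hSV⟩ := hsides
  set a := min ε (1/2) with ha
  set b := max (1 - ε) (1/2) with hb
  have ha0 : 0 < a := lt_min hε (by norm_num)
  have hb1 : b < 1 := max_lt (by linarith) (by norm_num)
  have hab : a ≤ b := le_trans (min_le_right _ _) (le_max_right _ _)
  have hga : g a ∈ U := hSU ⟨a, ⟨ha0, min_le_left _ _⟩, rfl⟩
  have hgb : g b ∈ V := hSV ⟨b, ⟨le_max_left _ _, hb1⟩, rfl⟩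
  by_contra hne
  rw [Set.not_nonempty_iff_eq_empty] at hne
  have hsub : g '' Set.Icc a b ⊆ Cᶜ := by
    rintro _ ⟨t, ht, rfl⟩ hgC
    have ht0 : 0 < t := lt_of_lt_of_le ha0 ht.1
    have ht1 : t < 1 := lt_of_le_of_lt ht.2 hb1
    have ht01 : t ∈ Set.Icc (0:ℝ) 1 := ⟨le_of_lt ht0, le_of_lt ht1⟩
    have hgtS : g t ∈ S := hgS ▸ ⟨t, ht01, rfl⟩
    have hgtQ : g t ∉ Q := by
      intro hq
      rcases hSQ ⟨hgtS, hq⟩ with h0 | h1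
      · have : t = (0:ℝ) := hgi ht01 (Set.left_mem_Icc.mpr (by norm_num)) h0
        linarith
      · have : t = (1:ℝ) := hgi ht01 (Set.right_mem_Icc.mpr (by norm_num)) h1
        linarith
    have hgtR : g t ∈ R := (hCsub hgC).resolve_right hgtQ
    have : g t ∈ (R ∩ S) \ Q := ⟨⟨hgtR, hgtS⟩, hgtQ⟩
    rw [hne] at this
    exact this
  have hconn : IsPreconnected (g '' Set.Icc a b) :=
    (isPreconnected_Icc).image g (hgc.mono (Set.Icc_subset_Icc (le_of_lt ha0) (le_of_lt hb1)))
  have hmem : g a ∈ g '' Set.Icc a b := ⟨a, Set.left_mem_Icc.mpr hab, rfl⟩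
  have hsubU : g '' Set.Icc a b ⊆ connectedComponentIn Cᶜ (g a) :=
    hconn.subset_connectedComponentIn hmem hsub
  have hgbU : g b ∈ connectedComponentIn Cᶜ (g a) :=
    hsubU ⟨b, Set.right_mem_Icc.mpr hab, rfl⟩
  have hU' : U = connectedComponentIn Cᶜ (g a) := by
    rw [hUdef] at hga ⊢
    exact connectedComponentIn_eq hga
  have hV' : V = connectedComponentIn Cᶜ (g b) := by
    rw [hVdef] at hgb ⊢
    exact connectedComponentIn_eq hgb
  apply hUV
  rw [hU', hV', connectedComponentIn_eq hgbU]
end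
end

section
/- Let D be an h-convex drawing of K_n with a specified witnessing set of convex sides, and let e and e' be distinct edges of K_n. If the drawn edge D[e'] has a point in the open region F_e = S² \ (Δ_e^1 ∪ Δ_e^2), then e' has one end in Σ_e^1 and one end in Σ_e^2. -/
open Set Topology

noncomputable section

/-- A good drawing of the complete graph `K_n` in the sphere: vertices are distinct
points, each edge is an arc joining its two ends, no edge passes through another
vertex, and two distinct edges have at most one common point, which, if it exists,
is a common incident vertex or a crossing. -/
structure GoodDrawing (n : ℕ) where
  vtx : Fin n → Sph
  vtx_inj : Function.Injective vtx
  edge : Fin n → Fin n → Set Sph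
  edge_symm : ∀ u v, edge u v = edge v u
  edge_arc : ∀ u v, u ≠ v → IsArcEnds (edge u v) (vtx u) (vtx v)
  edge_vtx : ∀ u v, u ≠ v → ∀ w, vtx w ∈ edge u v → w = u ∨ w = v
  edge_meet : ∀ u v x y, u ≠ v → x ≠ y → ({u, v} : Set (Fin n)) ≠ {x, y} →
    (edge u v ∩ edge x y).Subsingleton ∧
    ∀ p ∈ edge u v ∩ edge x y,
      (∃ w, (w = u ∨ w = v) ∧ (w = x ∨ w = y) ∧ p = vtx w) ∨
      IsCrossing (edge u v) (edge x y) p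

/-- The drawing `D[T]` of the 3-cycle `T` on vertices `u, v, w`. -/
def triCurve {n : ℕ} (D : GoodDrawing n) (u v w : Fin n) : Set Sph :=
  D.edge u v ∪ D.edge v w ∪ D.edge u w

/-- `Δ` is a closed side (closed disc bounded by) the drawing of the 3-cycle `u v w`. -/
def IsSideOfTri {n : ℕ} (D : GoodDrawing n) (u v w : Fin n) (Δ : Set Sph) : Prop :=
  ∃ x ∈ (triCurve D u v w)ᶜ, Δ = closure (connectedComponentIn (triCurve D u v w)ᶜ x)

/-- `Δ` is a convex side of the drawing of the 3-cycle `u v w`: whenever two vertices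
are drawn in `Δ`, the edge between them is also drawn in `Δ`. -/
def IsConvexSide {n : ℕ} (D : GoodDrawing n) (u v w : Fin n) (Δ : Set Sph) : Prop :=
  IsSideOfTri D u v w Δ ∧
  ∀ x y : Fin n, x ≠ y → D.vtx x ∈ Δ → D.vtx y ∈ Δ → D.edge x y ⊆ Δ

/-- `Δf` is a witnessing choice of convex sides for h-convexity of `D`: a convex side
for each 3-cycle such that whenever one 3-cycle is drawn inside the chosen side of
another, its chosen side is contained in that side. -/
def IsHConvexWitness {n : ℕ} (D : GoodDrawing n)
    (Δf : Fin n → Fin n → Fin n → Set Sph) : Prop :=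
  (∀ u v w, Δf u v w = Δf v u w) ∧
  (∀ u v w, Δf u v w = Δf u w v) ∧
  (∀ u v w : Fin n, u ≠ v → v ≠ w → u ≠ w → IsConvexSide D u v w (Δf u v w)) ∧
  (∀ u v w x y z : Fin n, u ≠ v → v ≠ w → u ≠ w → x ≠ y → y ≠ z → x ≠ z →
    triCurve D x y z ⊆ Δf u v w → Δf x y z ⊆ Δf u v w)

/-- `D` is h-convex. -/
def IsHConvex {n : ℕ} (D : GoodDrawing n) : Prop := ∃ Δf, IsHConvexWitness D Δf

/-- Common part of the (weak) pseudospherical conditions: each `γ u v` is a simple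
closed curve containing the edge `u v` and no vertex other than `u, v` (PS1), all
intersections of two of the curves are crossings, and each edge meets each other
curve at most once (PS3). -/
def PSWitnessCore {n : ℕ} (D : GoodDrawing n) (γ : Fin n → Fin n → Set Sph) : Prop :=
  (∀ u v, γ u v = γ v u) ∧
  ∀ u v : Fin n, u ≠ v →
    IsSimpleClosedCurve (γ u v) ∧
    D.edge u v ⊆ γ u v ∧
    (∀ w, D.vtx w ∈ γ u v → w = u ∨ w = v) ∧
    ∀ x y : Fin n, x ≠ y → ({u, v} : Set (Fin n)) ≠ {x, y} →
      (∀ p ∈ γ u v ∩ γ x y, IsCrossing (γ u v) (γ x y) p) ∧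
      (D.edge u v ∩ γ x y).Subsingleton

/-- `γ` witnesses that `D` is pseudospherical: (PS1), (PS2), (PS3). -/
def PseudosphericalWitness {n : ℕ} (D : GoodDrawing n)
    (γ : Fin n → Fin n → Set Sph) : Prop :=
  PSWitnessCore D γ ∧
  ∀ u v x y : Fin n, u ≠ v → x ≠ y → ({u, v} : Set (Fin n)) ≠ {x, y} →
    (γ u v ∩ γ x y).encard = 2

/-- `γ` witnesses that `D` is weakly pseudospherical: (PS1), (PS2w), (PS3). -/
def WeakPseudosphericalWitness {n : ℕ} (D : GoodDrawing n)
    (γ : Fin n → Fin n → Set Sph) : Prop :=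
  PSWitnessCore D γ ∧
  ∀ u v x y : Fin n, u ≠ v → x ≠ y → ({u, v} : Set (Fin n)) ≠ {x, y} →
    (γ u v ∩ γ x y).encard ≤ 2

/-- `D` is pseudospherical. -/
def Pseudospherical {n : ℕ} (D : GoodDrawing n) : Prop :=
  ∃ γ, PseudosphericalWitness D γ

/-- `D` is weakly pseudospherical. -/
def WeakPseudospherical {n : ℕ} (D : GoodDrawing n) : Prop :=
  ∃ γ, WeakPseudosphericalWitness D γ

/-- A collar of an arc `A` in the sphere: a homeomorphism of a neighbourhood of `A`
with an open subset of the plane taking `A` to the segment `[0,1] × {0}`.  It is used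
to speak of the two (local) sides of `A`. -/
structure Collar (A : Set Sph) where
  φ : PartialHomeomorph Sph (ℝ × ℝ)
  source_sub : A ⊆ φ.source
  image_eq : φ '' A = Set.Icc (0 : ℝ) 1 ×ˢ ({0} : Set ℝ)

/-- With respect to the collar `c` of the arc `A`, the set `X` touches the interior of
`A` from the side `s` (`true` = positive side, `false` = negative side): near some
interior point of `A`, the points of `X` off `A` are on side `s`. -/
def SideTouches {A : Set Sph} (c : Collar A) (X : Set Sph) (s : Bool) : Prop :=
  ∃ q ∈ A, (c.φ q).1 ∈ Set.Ioo (0 : ℝ) 1 ∧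
    ∃ U ∈ 𝓝 q, ((X ∩ U) \ A).Nonempty ∧
      ∀ x ∈ X ∩ U, x ∉ A → x ∈ c.φ.source ∧
        (if s then 0 < (c.φ x).2 else (c.φ x).2 < 0)

/-- `Σ_e^1`: the vertices `v` not incident with the (oriented) edge `e = ab` whose
chosen convex side of the 3-cycle on `a, b, v` lies on the first side of `e`
(with respect to the collar `c` of the drawn edge). -/
def sigmaSide1 {n : ℕ} (D : GoodDrawing n) (Δf : Fin n → Fin n → Fin n → Set Sph)
    (a b : Fin n) (c : Collar (D.edge a b)) : Set (Fin n) :=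
  {v | v ≠ a ∧ v ≠ b ∧ SideTouches c (Δf a b v) true}

/-- `Σ_e^2`: the remaining vertices not incident with `e = ab`. -/
def sigmaSide2 {n : ℕ} (D : GoodDrawing n) (Δf : Fin n → Fin n → Fin n → Set Sph)
    (a b : Fin n) (c : Collar (D.edge a b)) : Set (Fin n) :=
  {v | v ≠ a ∧ v ≠ b ∧ v ∉ sigmaSide1 D Δf a b c}

/-- The point set of the subdrawing of `D` induced by the set `S` of vertices. -/
def drawingOn {n : ℕ} (D : GoodDrawing n) (S : Set (Fin n)) : Set Sph :=
  (D.vtx '' S) ∪ ⋃ u ∈ S, ⋃ v ∈ S, ⋃ _ : u ≠ v, D.edge u v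

/-- `F` is the face `F_e^i` of the subdrawing `D_e^i` induced by `S ∪ {a,b}`:
a face of that subdrawing incident with the edge `ab` and containing the vertices
drawn in `Sother` (the other class). -/
def IsEdgeFace {n : ℕ} (D : GoodDrawing n) (a b : Fin n)
    (S Sother : Set (Fin n)) (F : Set Sph) : Prop :=
  IsFaceOf F (drawingOn D (S ∪ {a, b})) ∧
  D.edge a b ⊆ closure F ∧
  D.vtx '' Sother ⊆ F

/-- `C` is the drawing of a cycle of `K_n` through the edge `ab`. -/
def IsCycleDrawingThrough {n : ℕ} (D : GoodDrawing n) (a b : Fin n)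
    (C : Set Sph) : Prop :=
  ∃ (k : ℕ) (c : Fin (k + 3) → Fin n), Function.Injective c ∧
    (∃ j : Fin (k + 3), ({c j, c (j + 1)} : Set (Fin n)) = {a, b}) ∧
    C = ⋃ j : Fin (k + 3), D.edge (c j) (c (j + 1))

/-- `Δ` is a closed disc bounded by (the drawing of) a cycle of `K_n` containing the
edge `ab`, and containing the subdrawing induced by `S ∪ {a,b}`. -/
def IsBoundedDelta {n : ℕ} (D : GoodDrawing n) (a b : Fin n)
    (S : Set (Fin n)) (Δ : Set Sph) : Prop :=
  ∃ C : Set Sph, IsCycleDrawingThrough D a b C ∧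
    (∃ x ∈ Cᶜ, Δ = closure (connectedComponentIn Cᶜ x)) ∧
    drawingOn D (S ∪ {a, b}) ⊆ Δ


lemma edge_subset_drawingOn {n : ℕ} (D : GoodDrawing n) {S : Set (Fin n)} {u v : Fin n}
    (hu : u ∈ S) (hv : v ∈ S) (huv : u ≠ v) : D.edge u v ⊆ drawingOn D S := by
  intro p hp
  exact Or.inr (Set.mem_biUnion hu (Set.mem_biUnion hv (Set.mem_iUnion.2 ⟨huv, hp⟩)))

lemma face_subset_compl {X F : Set Sph} (h : IsFaceOf F X) : F ⊆ Xᶜ := by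
  obtain ⟨x, hx, rfl⟩ := h
  exact connectedComponentIn_subset _ _

/-- Let `D` be an h-convex drawing of `K_n` with a specified
witnessing set of convex sides and let `e = ab` and `e' = uv` be distinct edges.
If the drawn edge `D[e']` has a point in the open region
`F_e = S² \ (Δ_e^1 ∪ Δ_e^2) = F_e^1 ∩ F_e^2`, then `e'` has one end in `Σ_e^1` and
one end in `Σ_e^2`. -/
theorem edge_in_Fe_has_ends_on_both_sides (n : ℕ) (D : GoodDrawing n)
    (Δf : Fin n → Fin n → Fin n → Set Sph) (h : IsHConvexWitness D Δf)
    (a b : Fin n) (hab : a ≠ b) (c : Collar (D.edge a b))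
    (F₁ F₂ : Set Sph)
    (hF₁ : IsEdgeFace D a b (sigmaSide1 D Δf a b c) (sigmaSide2 D Δf a b c) F₁)
    (hF₂ : IsEdgeFace D a b (sigmaSide2 D Δf a b c) (sigmaSide1 D Δf a b c) F₂)
    (u v : Fin n) (huv : u ≠ v) (hne : ({u, v} : Set (Fin n)) ≠ {a, b})
    (hpt : (D.edge u v ∩ (F₁ ∩ F₂)).Nonempty) :
    (u ∈ sigmaSide1 D Δf a b c ∧ v ∈ sigmaSide2 D Δf a b c) ∨
    (u ∈ sigmaSide2 D Δf a b c ∧ v ∈ sigmaSide1 D Δf a b c) := by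
  obtain ⟨p, hpe, hp1, hp2⟩ := hpt
  set S₁ := sigmaSide1 D Δf a b c with hS₁
  set S₂ := sigmaSide2 D Δf a b c with hS₂
  have hd1 : F₁ ⊆ (drawingOn D (S₁ ∪ {a, b}))ᶜ := face_subset_compl hF₁.1
  have hd2 : F₂ ⊆ (drawingOn D (S₂ ∪ {a, b}))ᶜ := face_subset_compl hF₂.1
  have c1 : ¬ (u ∈ S₁ ∪ {a, b} ∧ v ∈ S₁ ∪ {a, b}) := fun ⟨h1, h2⟩ =>
    hd1 hp1 (edge_subset_drawingOn D h1 h2 huv hpe)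
  have c2 : ¬ (u ∈ S₂ ∪ {a, b} ∧ v ∈ S₂ ∪ {a, b}) := fun ⟨h1, h2⟩ =>
    hd2 hp2 (edge_subset_drawingOn D h1 h2 huv hpe)
  have cls : ∀ w : Fin n, (w = a ∨ w = b) ∨ w ∈ S₁ ∨ w ∈ S₂ := by
    intro w
    by_cases ha' : w = a
    · exact Or.inl (Or.inl ha')
    by_cases hb' : w = b
    · exact Or.inl (Or.inr hb')
    by_cases h1 : w ∈ S₁
    · exact Or.inr (Or.inl h1)
    · exact Or.inr (Or.inr ⟨ha', hb', h1⟩)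
  have mab : ∀ w : Fin n, (w = a ∨ w = b) → ∀ S : Set (Fin n), w ∈ S ∪ {a, b} := by
    intro w hw S
    rcases hw with h | h <;> simp [h]
  rcases cls u with hu | hu | hu
  · rcases cls v with hv | hv | hv
    · exact absurd ⟨mab u hu _, mab v hv _⟩ c1
    · exact absurd ⟨mab u hu _, Or.inl hv⟩ c1
    · exact absurd ⟨mab u hu _, Or.inl hv⟩ c2
  · rcases cls v with hv | hv | hv
    · exact absurd ⟨Or.inl hu, mab v hv _⟩ c1
    · exact absurd ⟨Or.inl hu, Or.inl hv⟩ c1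
    · exact Or.inl ⟨hu, hv⟩
  · rcases cls v with hv | hv | hv
    · exact absurd ⟨Or.inl hu, mab v hv _⟩ c2
    · exact Or.inr ⟨hu, hv⟩
    · exact absurd ⟨Or.inl hu, Or.inl hv⟩ c2
end
end
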